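/- Let α be strictly increasing with α_n > 1, α_n → ∞, and lim_{n→∞} (log n)/α_n = 0 (i.e. Λ₀(α) is nuclear). The following assertions are equivalent: (a) the operator Δ, given by (Δx)_n := Σ_{m=1}^n (−1)^{m−1}·binom(n−1, m−1)·x_m, maps Λ₀(α) into itself and is continuous; (b) for each k ≥ 1 there exists l ≥ k such that sup_{n≥1} Σ_{m=1}^n (e^{-α_n/k}/e^{-α_m/l})·binom(n−1, m−1) < ∞; (c) lim_{n→∞} n/α_n = 0. -/

import Mathlib

open Filter Finset Topology

noncomputable section

/-- The weight `w_k(n) = e^{-alpha_n / k}`.  Indices are shifted by one: the natural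
numbers `k n : Nat` represent the indices `k+1` and `n+1` (both running from `1`). -/
def wt (a : ℕ → ℝ) (k n : ℕ) : ℝ := Real.exp (-(a n) / ((k : ℝ) + 1))

/-- Membership in the power series space of finite type `Λ₀(α)`:
`x ∈ Λ₀(α)` iff `w_k(n)|x_n| → 0` for every `k ≥ 1`. -/
def memLambda (a : ℕ → ℝ) (x : ℕ → ℂ) : Prop :=
  ∀ k : ℕ, Tendsto (fun n => wt a k n * ‖x n‖) atTop (𝓝 0)

/-- The norm `p_k(x) = sup_n w_k(n)|x_n|` generating the Fréchet topology of `Λ₀(α)`. -/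
def pk (a : ℕ → ℝ) (k : ℕ) (x : ℕ → ℂ) : ℝ := ⨆ n : ℕ, wt a k n * ‖x n‖

/-- The discrete Cesàro operator `(C x)_n = (x_1 + ⋯ + x_n)/n` (0-indexed). -/
def cesaro (x : ℕ → ℂ) : ℕ → ℂ := fun n => (∑ i ∈ Finset.range (n + 1), x i) / ((n : ℂ) + 1)

/-- The operator `Δ` given by the lower triangular matrix
`Δ_{n,m} = (-1)^{m-1} C(n-1, m-1)` for `1 ≤ m ≤ n` (0-indexed here). -/
def deltaOp (x : ℕ → ℂ) : ℕ → ℂ :=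
  fun n => ∑ m ∈ Finset.range (n + 1), ((-1 : ℂ) ^ m * (n.choose m : ℂ)) * x m

/-!
Everything is governed by the growth of `w_k(n) 2ⁿ`. Testing `Δ` on `x_m = (-1)^m`, a bounded
sequence, gives `(Δx)_n = 2ⁿ`, so (a) forces `w_k(n) 2ⁿ → 0` for every `k`, which is (c).
Conversely, `w_k = w_{2k}²` and `w_{2k}` is decreasing, so the `n`-th sum in (b) with `l = 2k` is
at most `w_{2k}(n) 2ⁿ`, which tends to `0` under (c). Finally (b) bounds `w_k(n) |(Δx)_n|` by
`M p_l(x)` termwise, which is the continuity estimate, and the extra factor `w_{2k}(n) → 0`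
in `w_k(n) |(Δx)_n| = w_{2k}(n) · w_{2k}(n) |(Δx)_n|` puts `Δx` back in `Λ₀(α)`.
-/

section Weights

variable {a : ℕ → ℝ}

lemma wt_pos (a : ℕ → ℝ) (k n : ℕ) : 0 < wt a k n := Real.exp_pos _

lemma wt_two_mul_add_one_mul_self (a : ℕ → ℝ) (k n : ℕ) :
    wt a (2 * k + 1) n * wt a (2 * k + 1) n = wt a k n := by
  rw [wt, wt, ← Real.exp_add]
  congr 1
  push_cast
  field_simp
  ring

lemma wt_antitone (hmono : Monotone a) (k : ℕ) : Antitone (wt a k) := fun _ _ hmn =>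
  Real.exp_le_exp.2 <| div_le_div_of_nonneg_right (neg_le_neg (hmono hmn)) (by positivity)

lemma tendsto_wt (htop : Tendsto a atTop atTop) (k : ℕ) : Tendsto (wt a k) atTop (𝓝 0) :=
  Real.tendsto_exp_atBot.comp <| by
    simpa only [neg_div, Function.comp_def] using
      tendsto_neg_atTop_atBot.comp (htop.atTop_div_const (by positivity : (0 : ℝ) < k + 1))

lemma wt_mul_two_pow (a : ℕ → ℝ) (k n : ℕ) :
    wt a k n * 2 ^ n = Real.exp (n * Real.log 2 - a n / (k + 1)) := by
  rw [wt, ← Real.exp_log (by norm_num : (0 : ℝ) < 2), ← Real.exp_nat_mul, ← Real.exp_add,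
    Real.exp_log (by norm_num)]
  ring_nf

lemma tendsto_wt_mul_two_pow_iff (htop : Tendsto a atTop atTop) :
    (∀ k, Tendsto (fun n => wt a k n * 2 ^ n) atTop (𝓝 0)) ↔
      Tendsto (fun n : ℕ => ((n : ℝ) + 1) / a n) atTop (𝓝 0) := by
  have hlog : 0 < Real.log 2 := Real.log_pos one_lt_two
  have hpos : ∀ᶠ n in atTop, 0 < a n := htop.eventually_gt_atTop 0
  simp_rw [wt_mul_two_pow]
  constructor
  · intro h
    have hsmall : ∀ k : ℕ, ∀ᶠ n : ℕ in atTop, (n : ℝ) / a n ≤ 1 / ((k + 1) * Real.log 2) := by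
      intro k
      filter_upwards [(h k).eventually_lt_const one_pos, hpos] with n hn han
      rw [Real.exp_lt_one_iff, sub_neg, lt_div_iff₀ (by positivity)] at hn
      rw [div_le_div_iff₀ han (by positivity)]
      linarith
    have hdiv : Tendsto (fun n : ℕ => (n : ℝ) / a n) atTop (𝓝 0) := by
      refine tendsto_order.2 ⟨fun ε hε => ?_, fun ε hε => ?_⟩
      · filter_upwards [hpos] with n han
        exact hε.trans_le (by positivity)
      · obtain ⟨k, hk⟩ := exists_nat_gt (1 / (ε * Real.log 2))
        filter_upwards [hsmall k] with n hn
        refine hn.trans_lt ((div_lt_iff₀ (by positivity)).2 ?_)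
        rw [div_lt_iff₀ (by positivity)] at hk
        nlinarith
    simpa only [add_div, one_div, add_zero, Pi.inv_apply] using hdiv.add htop.inv_tendsto_atTop
  · intro h k
    refine Real.tendsto_exp_atBot.comp (tendsto_atBot_mono' atTop ?_ (tendsto_neg_atTop_atBot.comp
      (htop.atTop_div_const (by positivity : (0 : ℝ) < 2 * (k + 1)))))
    filter_upwards [h.eventually_lt_const (by positivity : 0 < 1 / (2 * (k + 1) * Real.log 2)),
      hpos] with n hn han
    rw [div_lt_iff₀ han, div_mul_eq_mul_div, lt_div_iff₀ (by positivity)] at hn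
    have hhalf : (n : ℝ) * Real.log 2 ≤ a n / (2 * (k + 1)) := by
      rw [le_div_iff₀ (by positivity)]
      nlinarith
    have htwice : a n / (k + 1) = 2 * (a n / (2 * (k + 1))) := by
      field_simp
    simp only [Function.comp_apply]
    linarith

end Weights

section Lambda

variable {a : ℕ → ℝ} {x : ℕ → ℂ}

lemma le_pk (hx : memLambda a x) (l n : ℕ) : wt a l n * ‖x n‖ ≤ pk a l x :=
  le_ciSup (hx l).bddAbove_range n

lemma pk_nonneg (hx : memLambda a x) (l : ℕ) : 0 ≤ pk a l x :=
  (mul_nonneg (wt_pos a l 0).le (norm_nonneg _)).trans (le_pk hx l 0)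

lemma memLambda_neg_one_pow (htop : Tendsto a atTop atTop) :
    memLambda a (fun m => (-1) ^ m) := fun k => by
  simpa using tendsto_wt htop k

lemma norm_deltaOp_neg_one_pow (n : ℕ) : ‖deltaOp (fun m => (-1) ^ m) n‖ = 2 ^ n := by
  have hsum : deltaOp (fun m => (-1) ^ m) n = 2 ^ n := by
    simp only [deltaOp, mul_right_comm _ (n.choose _ : ℂ), ← pow_add, ← two_mul, pow_mul,
      neg_one_sq, one_pow, one_mul]
    exact_mod_cast Nat.sum_range_choose n
  simp [hsum]

lemma norm_deltaOp_le (x : ℕ → ℂ) (n : ℕ) :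
    ‖deltaOp x n‖ ≤ ∑ m ∈ range (n + 1), (n.choose m : ℝ) * ‖x m‖ :=
  (norm_sum_le _ _).trans_eq <| sum_congr rfl fun m _ => by simp

lemma wt_mul_norm_deltaOp_le {k l : ℕ} {M : ℝ} (hx : memLambda a x) (n : ℕ)
    (hM : ∑ m ∈ range (n + 1), wt a k n / wt a l m * (n.choose m : ℝ) ≤ M) :
    wt a k n * ‖deltaOp x n‖ ≤ M * pk a l x :=
  calc wt a k n * ‖deltaOp x n‖
      ≤ wt a k n * ∑ m ∈ range (n + 1), (n.choose m : ℝ) * ‖x m‖ :=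
        mul_le_mul_of_nonneg_left (norm_deltaOp_le x n) (wt_pos a k n).le
    _ = ∑ m ∈ range (n + 1), wt a k n / wt a l m * (n.choose m : ℝ) * (wt a l m * ‖x m‖) := by
        rw [mul_sum]
        refine sum_congr rfl fun m _ => ?_
        field_simp [(wt_pos a l m).ne']
    _ ≤ ∑ m ∈ range (n + 1), wt a k n / wt a l m * (n.choose m : ℝ) * pk a l x :=
        sum_le_sum fun m _ => mul_le_mul_of_nonneg_left (le_pk hx l m)
          (mul_nonneg (div_nonneg (wt_pos a k n).le (wt_pos a l m).le) (Nat.cast_nonneg _))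
    _ ≤ M * pk a l x := by
        rw [← sum_mul]
        exact mul_le_mul_of_nonneg_right hM (pk_nonneg hx l)

end Lambda

variable {a : ℕ → ℝ}

lemma exists_weighted_choose_sum_le_of_tendsto (hmono : Monotone a)
    (htop : Tendsto a atTop atTop) (h : Tendsto (fun n : ℕ => ((n : ℝ) + 1) / a n) atTop (𝓝 0))
    (k : ℕ) : ∃ l : ℕ, k ≤ l ∧ ∃ M : ℝ, ∀ n : ℕ,
      (∑ m ∈ range (n + 1), wt a k n / wt a l m * (n.choose m : ℝ)) ≤ M := by
  obtain ⟨M, hM⟩ := ((tendsto_wt_mul_two_pow_iff htop).2 h (2 * k + 1)).bddAbove_range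
  refine ⟨2 * k + 1, by omega, M, fun n => le_trans ?_ (hM ⟨n, rfl⟩)⟩
  calc ∑ m ∈ range (n + 1), wt a k n / wt a (2 * k + 1) m * (n.choose m : ℝ)
      ≤ ∑ m ∈ range (n + 1), wt a (2 * k + 1) n * (n.choose m : ℝ) := by
        refine sum_le_sum fun m hm => mul_le_mul_of_nonneg_right ?_ (Nat.cast_nonneg _)
        rw [div_le_iff₀ (wt_pos a _ m), ← wt_two_mul_add_one_mul_self]
        exact mul_le_mul_of_nonneg_left (wt_antitone hmono _ (mem_range_succ_iff.1 hm))
          (wt_pos a _ n).le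
    _ = wt a (2 * k + 1) n * 2 ^ n := by
        rw [← mul_sum]
        congr 1
        exact_mod_cast Nat.sum_range_choose n

lemma deltaOp_continuous_of_weighted_choose_sum_le (htop : Tendsto a atTop atTop)
    (h : ∀ k : ℕ, ∃ l : ℕ, k ≤ l ∧ ∃ M : ℝ, ∀ n : ℕ,
      (∑ m ∈ range (n + 1), wt a k n / wt a l m * (n.choose m : ℝ)) ≤ M) :
    (∀ x, memLambda a x → memLambda a (deltaOp x)) ∧
      ∀ k : ℕ, ∃ l : ℕ, ∃ M : ℝ, 0 < M ∧
        ∀ x, memLambda a x → pk a k (deltaOp x) ≤ M * pk a l x := by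
  refine ⟨fun x hx k => ?_, fun k => ?_⟩
  · obtain ⟨l, -, M, hM⟩ := h (2 * k + 1)
    have hdecay := (tendsto_wt htop (2 * k + 1)).mul_const (M * pk a l x)
    rw [zero_mul] at hdecay
    refine squeeze_zero (fun n => mul_nonneg (wt_pos a k n).le (norm_nonneg _)) (fun n => ?_) hdecay
    rw [← wt_two_mul_add_one_mul_self, mul_assoc]
    exact mul_le_mul_of_nonneg_left (wt_mul_norm_deltaOp_le hx n (hM n)) (wt_pos a _ n).le
  · obtain ⟨l, -, M, hM⟩ := h k
    have hMpos : 0 < M := by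
      have h0 := hM 0
      simp only [zero_add, range_one, sum_singleton, Nat.choose_self, Nat.cast_one, mul_one] at h0
      exact (div_pos (wt_pos a k 0) (wt_pos a l 0)).trans_le h0
    exact ⟨l, M, hMpos, fun x hx => ciSup_le fun n => wt_mul_norm_deltaOp_le hx n (hM n)⟩

lemma tendsto_of_deltaOp_mapsTo (htop : Tendsto a atTop atTop)
    (h : ∀ x, memLambda a x → memLambda a (deltaOp x)) :
    Tendsto (fun n : ℕ => ((n : ℝ) + 1) / a n) atTop (𝓝 0) :=
  (tendsto_wt_mul_two_pow_iff htop).1 fun k => by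
    simpa only [norm_deltaOp_neg_one_pow] using h _ (memLambda_neg_one_pow htop) k

theorem stmt10_general (a : ℕ → ℝ) (hmono : StrictMono a)
    (htop : Tendsto a atTop atTop) :
    [ (∀ x, memLambda a x → memLambda a (deltaOp x)) ∧
        (∀ k : ℕ, ∃ l : ℕ, ∃ M : ℝ, 0 < M ∧
          ∀ x, memLambda a x → pk a k (deltaOp x) ≤ M * pk a l x),
      ∀ k : ℕ, ∃ l : ℕ, k ≤ l ∧ ∃ M : ℝ, ∀ n : ℕ,
        (∑ m ∈ Finset.range (n + 1), wt a k n / wt a l m * (n.choose m : ℝ)) ≤ M,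
      Tendsto (fun n : ℕ => ((n : ℝ) + 1) / a n) atTop (𝓝 0) ].TFAE := by
  tfae_have 1 → 3 := fun h => tendsto_of_deltaOp_mapsTo htop h.1
  tfae_have 3 → 2 := exists_weighted_choose_sum_le_of_tendsto hmono.monotone htop
  tfae_have 2 → 1 := deltaOp_continuous_of_weighted_choose_sum_le htop
  tfae_finish

/-- assume `Λ₀(α)` is nuclear (`(log n)/α_n → 0`).  The following are
equivalent: (a) `Δ` maps `Λ₀(α)` into itself and is continuous; (b) for each `k`
there is `l ≥ k` with `sup_n ∑_{m=1}^n (w_k(n)/w_l(m)) C(n-1, m-1) < ∞`;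
(c) `n/α_n → 0`. -/
theorem stmt10 (a : ℕ → ℝ) (hmono : StrictMono a) (h1 : ∀ n, 1 < a n)
    (htop : Tendsto a atTop atTop)
    (hnuc : Tendsto (fun n : ℕ => Real.log ((n : ℝ) + 1) / a n) atTop (𝓝 0)) :
    [ (∀ x, memLambda a x → memLambda a (deltaOp x)) ∧
        (∀ k : ℕ, ∃ l : ℕ, ∃ M : ℝ, 0 < M ∧
          ∀ x, memLambda a x → pk a k (deltaOp x) ≤ M * pk a l x),
      ∀ k : ℕ, ∃ l : ℕ, k ≤ l ∧ ∃ M : ℝ, ∀ n : ℕ,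
        (∑ m ∈ Finset.range (n + 1), wt a k n / wt a l m * (n.choose m : ℝ)) ≤ M,
      Tendsto (fun n : ℕ => ((n : ℝ) + 1) / a n) atTop (𝓝 0) ].TFAE :=
  stmt10_general a hmono htop
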